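/- arXiv:math/9901035 — 7 statements merged into one kernel-verified Lean document; each statement's English description precedes it below -/
import Mathlib

section
/- If a power series ∑ c_k z^k converges for all z in the open unit disk and satisfies |∑ c_k z^k| < 1 for all |z| < 1, then ∑ |c_k| |z|^k < 1 for all |z| < 1/3. -/
/-!
Write `f w = ∑ c k w ^ k` and `a = ‖c 0‖`. Composing `f` with the disk automorphism
`w ↦ (w - f 0) / (1 - conj (f 0) * w)` and applying the Schwarz lemma gives the
Schwarz–Pick bound `‖c 1‖ ≤ 1 - a ^ 2`. Averaging `f` over the `k`-th roots of unity times a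
`k`-th root of `w` produces `∑ c (k m) w ^ m`, which again has modulus `< 1` on the disk, so
Wiener's inequality `‖c k‖ ≤ 1 - a ^ 2` holds for every `k ≥ 1`. For `r = ‖z‖ < 1/3` this gives
`∑ ‖c k‖ r ^ k ≤ a + (1 - a ^ 2) r / (1 - r) < a + (1 - a ^ 2) / 2 ≤ 1`.
-/

open Metric Set Finset
open scoped ComplexConjugate NNReal ENNReal

namespace Complex

noncomputable def mobius (a w : ℂ) : ℂ := (w - a) / (1 - conj a * w)

lemma normSq_one_sub_conj_mul_sub_normSq_sub (a w : ℂ) :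
    normSq (1 - conj a * w) - normSq (w - a) = (1 - normSq a) * (1 - normSq w) := by
  simp only [normSq_apply, sub_re, sub_im, mul_re, mul_im, conj_re, conj_im, one_re, one_im]
  ring

lemma one_sub_conj_mul_ne_zero {a w : ℂ} (ha : ‖a‖ < 1) (hw : ‖w‖ < 1) :
    1 - conj a * w ≠ 0 := by
  refine sub_ne_zero.2 fun h => ?_
  have : ‖conj a * w‖ < 1 := by
    rw [norm_mul, RCLike.norm_conj]
    exact mul_lt_one_of_nonneg_of_lt_one_left (norm_nonneg a) ha hw.le
  rw [← h, norm_one] at this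
  exact this.false

lemma mobius_self (a : ℂ) : mobius a a = 0 := by
  simp [mobius]

lemma norm_mobius_lt_one {a w : ℂ} (ha : ‖a‖ < 1) (hw : ‖w‖ < 1) : ‖mobius a w‖ < 1 := by
  have hid := normSq_one_sub_conj_mul_sub_normSq_sub a w
  simp only [normSq_eq_norm_sq] at hid
  have hsq : ‖w - a‖ ^ 2 < ‖1 - conj a * w‖ ^ 2 := by
    nlinarith [mul_pos (sub_pos.2 (pow_lt_one₀ (norm_nonneg a) ha two_ne_zero))
      (sub_pos.2 (pow_lt_one₀ (norm_nonneg w) hw two_ne_zero))]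
  rw [mobius, norm_div, div_lt_one (norm_pos_iff.2 (one_sub_conj_mul_ne_zero ha hw))]
  exact lt_of_pow_lt_pow_left₀ 2 (norm_nonneg _) hsq

lemma hasDerivAt_mobius_self {a : ℂ} (ha : ‖a‖ < 1) :
    HasDerivAt (mobius a) (((1 - ‖a‖ ^ 2 : ℝ) : ℂ)⁻¹) a := by
  have hden := one_sub_conj_mul_ne_zero ha ha
  have hconj : conj a * a = ((‖a‖ ^ 2 : ℝ) : ℂ) := by
    rw [mul_comm, mul_conj, normSq_eq_norm_sq]
  refine (((hasDerivAt_id a).sub_const a).div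
    (((hasDerivAt_id a).const_mul (conj a)).const_sub 1) hden).congr_deriv ?_
  simp only [id_eq, hconj] at hden ⊢
  push_cast at hden ⊢
  field_simp
  ring

lemma differentiableOn_mobius {a : ℂ} (ha : ‖a‖ < 1) :
    DifferentiableOn ℂ (mobius a) (ball 0 1) :=
  fun _ hw => ((differentiableWithinAt_id.sub_const a).div
    ((differentiableWithinAt_id.const_mul _).const_sub 1)
    (one_sub_conj_mul_ne_zero ha (mem_ball_zero_iff.1 hw)))

theorem norm_deriv_le_one_sub_sq_of_mapsTo_ball {f : ℂ → ℂ}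
    (hd : DifferentiableOn ℂ f (ball 0 1)) (hf : MapsTo f (ball 0 1) (ball 0 1)) :
    ‖deriv f 0‖ ≤ 1 - ‖f 0‖ ^ 2 := by
  have ha : ‖f 0‖ < 1 := mem_ball_zero_iff.1 (hf (mem_ball_self one_pos))
  have hpos : 0 < 1 - ‖f 0‖ ^ 2 := sub_pos.2 (pow_lt_one₀ (norm_nonneg _) ha two_ne_zero)
  have hg : DifferentiableOn ℂ (mobius (f 0) ∘ f) (ball 0 1) :=
    (differentiableOn_mobius ha).comp hd hf
  have hmaps : MapsTo (mobius (f 0) ∘ f) (ball 0 1) (closedBall ((mobius (f 0) ∘ f) 0) 1) := by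
    intro z hz
    rw [Function.comp_apply, mobius_self, mem_closedBall_zero_iff]
    exact (norm_mobius_lt_one ha (mem_ball_zero_iff.1 (hf hz))).le
  have hderiv : deriv (mobius (f 0) ∘ f) 0 = ((1 - ‖f 0‖ ^ 2 : ℝ) : ℂ)⁻¹ * deriv f 0 :=
    ((hasDerivAt_mobius_self ha).comp 0
      (hd.differentiableAt (isOpen_ball.mem_nhds (mem_ball_self one_pos))).hasDerivAt).deriv
  have := norm_deriv_le_div_of_mapsTo_ball hg hmaps one_pos
  rw [hderiv, norm_mul, norm_inv, norm_real, Real.norm_of_nonneg hpos.le, div_one,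
    inv_mul_le_iff₀ hpos, mul_one] at this
  exact this

lemma exists_pow_eq_and_norm_lt_one {k : ℕ} (hk : 0 < k) {w : ℂ} (hw : ‖w‖ < 1) :
    ∃ ζ : ℂ, ζ ^ k = w ∧ ‖ζ‖ < 1 := by
  obtain ⟨ζ, rfl⟩ := IsAlgClosed.exists_pow_nat_eq w hk
  exact ⟨ζ, rfl, by simpa [pow_lt_one_iff_of_nonneg (norm_nonneg ζ) hk.ne'] using hw⟩

end Complex

lemma IsPrimitiveRoot.sum_range_pow_pow_eq_ite {R : Type*} [CommRing R] [IsDomain R] {ω : R}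
    {k : ℕ} (hω : IsPrimitiveRoot ω k) (m : ℕ) :
    ∑ j ∈ range k, (ω ^ m) ^ j = if k ∣ m then (k : R) else 0 := by
  split_ifs with hdvd
  · simp [(hω.pow_eq_one_iff_dvd m).2 hdvd]
  · have hne : ω ^ m - 1 ≠ 0 := sub_ne_zero.2 fun h => hdvd ((hω.pow_eq_one_iff_dvd m).1 h)
    refine (mul_eq_zero.1 ?_).resolve_right hne
    rw [geom_sum_mul, ← pow_mul, mul_comm, pow_mul, hω.pow_eq_one, one_pow, sub_self]

lemma IsPrimitiveRoot.sum_range_tsum_mul_pow_pow_eq {ω : ℂ} {k : ℕ} (hω : IsPrimitiveRoot ω k)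
    (hk : 0 < k) {g : ℕ → ℂ} (hg : Summable g) :
    ∑ j ∈ range k, ∑' m, g m * (ω ^ j) ^ m = k * ∑' n, g (k * n) := by
  have hnorm : ‖ω‖ = 1 := hω.norm'_eq_one hk.ne'
  have hgj : ∀ j ∈ range k, Summable fun m => g m * (ω ^ j) ^ m := fun j _ =>
    Summable.of_norm (by simpa [hnorm] using summable_norm_iff.2 hg)
  have hinj : Function.Injective (k * ·) := fun _ _ h => Nat.eq_of_mul_eq_mul_left hk h
  have hsupp : Function.support (fun m => g m * if k ∣ m then (k : ℂ) else 0) ⊆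
      Set.range (k * ·) := fun m hm => by
    by_contra hmk
    exact hm (by simp [show ¬k ∣ m from fun ⟨n, hn⟩ => hmk ⟨n, hn.symm⟩])
  calc ∑ j ∈ range k, ∑' m, g m * (ω ^ j) ^ m
      = ∑' m, g m * ∑ j ∈ range k, (ω ^ m) ^ j := by
        rw [← Summable.tsum_finsetSum hgj]
        simp_rw [mul_sum, ← pow_mul, mul_comm]
    _ = ∑' m, g m * if k ∣ m then (k : ℂ) else 0 := by
        simp_rw [hω.sum_range_pow_pow_eq_ite]
    _ = ∑' n, g (k * n) * k := (hinj.tsum_eq hsupp).symm.trans (by simp)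
    _ = k * ∑' n, g (k * n) := by rw [tsum_mul_right, mul_comm]

lemma tsum_mul_pow_le_add_of_le {b : ℕ → ℝ} {M r : ℝ} (hs : Summable fun k => b k * r ^ k)
    (hr0 : 0 ≤ r) (hr1 : r < 1) (hb : ∀ k, 0 < k → b k ≤ M) :
    ∑' k, b k * r ^ k ≤ b 0 + M * (r / (1 - r)) := by
  have hgeom : HasSum (fun n : ℕ => M * r ^ (n + 1)) (M * (r / (1 - r))) := by
    simpa [pow_succ', div_eq_mul_inv, mul_assoc] using
      ((hasSum_geometric_of_lt_one hr0 hr1).mul_left r).mul_left M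
  rw [hs.tsum_eq_zero_add, pow_zero, mul_one]
  gcongr
  exact hasSum_le (fun n => mul_le_mul_of_nonneg_right (hb _ n.succ_pos) (by positivity))
    ((summable_nat_add_iff 1).2 hs).hasSum hgeom

section PowerSeries

open FormalMultilinearSeries

lemma le_radius_ofScalars_of_summable {𝕜 : Type*} [NontriviallyNormedField 𝕜] {c : ℕ → 𝕜}
    {z : 𝕜} (h : Summable fun n => c n * z ^ n) : (‖z‖₊ : ℝ≥0∞) ≤ (ofScalars 𝕜 c).radius :=
  (ofScalars 𝕜 c).le_radius_of_tendsto (l := 0) <| by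
    simpa [norm_mul, norm_pow] using h.tendsto_atTop_zero.norm

variable {c : ℕ → ℂ} {k : ℕ}

lemma one_le_radius_ofScalars (hconv : ∀ z : ℂ, ‖z‖ < 1 → Summable fun k => c k * z ^ k) :
    1 ≤ (ofScalars ℂ c).radius := by
  refine ENNReal.le_of_forall_nnreal_lt fun r hr => ?_
  simpa using le_radius_ofScalars_of_summable (hconv r (by simpa using hr))

lemma summable_norm_mul_pow_of_lt_one
    (hconv : ∀ z : ℂ, ‖z‖ < 1 → Summable fun k => c k * z ^ k) {r : ℝ} (hr0 : 0 ≤ r)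
    (hr : r < 1) : Summable fun k => ‖c k‖ * r ^ k := by
  lift r to ℝ≥0 using hr0
  simpa using (ofScalars ℂ c).summable_norm_mul_pow
    ((ENNReal.coe_lt_one_iff.2 hr).trans_le (one_le_radius_ofScalars hconv))

lemma hasFPowerSeriesOnBall_tsum_mul_pow
    (hconv : ∀ z : ℂ, ‖z‖ < 1 → Summable fun k => c k * z ^ k) :
    HasFPowerSeriesOnBall (fun z => ∑' k, c k * z ^ k) (ofScalars ℂ c) 0 1 := by
  have h := one_le_radius_ofScalars hconv
  have hsum : (ofScalars ℂ c).sum = fun z => ∑' k, c k * z ^ k := ofScalarsSum_eq_tsum c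
  exact hsum ▸ ((ofScalars ℂ c).hasFPowerSeriesOnBall (one_pos.trans_le h)).mono one_pos h

theorem norm_coeff_one_le_one_sub_sq
    (hconv : ∀ z : ℂ, ‖z‖ < 1 → Summable fun k => c k * z ^ k)
    (hbound : ∀ z : ℂ, ‖z‖ < 1 → ‖∑' k : ℕ, c k * z ^ k‖ < 1) :
    ‖c 1‖ ≤ 1 - ‖c 0‖ ^ 2 := by
  have hf := hasFPowerSeriesOnBall_tsum_mul_pow hconv
  have hd : DifferentiableOn ℂ (fun z => ∑' k, c k * z ^ k) (ball 0 1) := by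
    simpa [← ENNReal.coe_one] using hf.differentiableOn
  have hmaps : MapsTo (fun z => ∑' k, c k * z ^ k) (ball 0 1) (ball 0 1) := fun z hz =>
    mem_ball_zero_iff.2 (hbound z (mem_ball_zero_iff.1 hz))
  simpa [hf.hasFPowerSeriesAt.deriv, zero_pow_eq] using
    Complex.norm_deriv_le_one_sub_sq_of_mapsTo_ball hd hmaps

lemma summable_comp_mul_mul_pow (hconv : ∀ z : ℂ, ‖z‖ < 1 → Summable fun k => c k * z ^ k)
    (hk : 0 < k) {w : ℂ} (hw : ‖w‖ < 1) : Summable fun m => c (k * m) * w ^ m := by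
  obtain ⟨ζ, rfl, hζ⟩ := Complex.exists_pow_eq_and_norm_lt_one hk hw
  have hinj : Function.Injective (k * ·) := fun _ _ h => Nat.eq_of_mul_eq_mul_left hk h
  refine Summable.of_norm ?_
  simpa [Function.comp_def, ← pow_mul] using
    (summable_norm_mul_pow_of_lt_one hconv (norm_nonneg ζ) hζ).comp_injective hinj

lemma norm_tsum_comp_mul_mul_pow_lt_one
    (hconv : ∀ z : ℂ, ‖z‖ < 1 → Summable fun k => c k * z ^ k)
    (hbound : ∀ z : ℂ, ‖z‖ < 1 → ‖∑' k : ℕ, c k * z ^ k‖ < 1)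
    (hk : 0 < k) {w : ℂ} (hw : ‖w‖ < 1) : ‖∑' m, c (k * m) * w ^ m‖ < 1 := by
  obtain ⟨ζ, rfl, hζ⟩ := Complex.exists_pow_eq_and_norm_lt_one hk hw
  obtain ⟨ω, hω⟩ : ∃ ω : ℂ, IsPrimitiveRoot ω k := ⟨_, Complex.isPrimitiveRoot_exp k hk.ne'⟩
  have hnorm := hω.norm'_eq_one hk.ne'
  have hlt : ‖∑ j ∈ range k, ∑' m, c m * ζ ^ m * (ω ^ j) ^ m‖ < k :=
    calc _ ≤ ∑ j ∈ range k, ‖∑' m, c m * (ω ^ j * ζ) ^ m‖ := by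
          simp_rw [mul_pow, mul_comm (_ ^ _ : ℂ) (ζ ^ _), ← mul_assoc]
          exact norm_sum_le _ _
      _ < ∑ _j ∈ range k, 1 :=
          sum_lt_sum_of_nonempty (nonempty_range_iff.2 hk.ne') fun j _ =>
            hbound _ (by simpa [hnorm] using hζ)
      _ = k := by simp
  rw [hω.sum_range_tsum_mul_pow_pow_eq hk (hconv ζ hζ), norm_mul, Complex.norm_natCast] at hlt
  simp_rw [pow_mul] at hlt
  exact (mul_lt_iff_lt_one_right (by positivity)).1 hlt

theorem norm_coeff_le_one_sub_sq (hconv : ∀ z : ℂ, ‖z‖ < 1 → Summable fun k => c k * z ^ k)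
    (hbound : ∀ z : ℂ, ‖z‖ < 1 → ‖∑' k : ℕ, c k * z ^ k‖ < 1) (hk : 0 < k) :
    ‖c k‖ ≤ 1 - ‖c 0‖ ^ 2 := by
  simpa using norm_coeff_one_le_one_sub_sq (c := fun m => c (k * m))
    (fun _ hw => summable_comp_mul_mul_pow hconv hk hw)
    (fun _ hw => norm_tsum_comp_mul_mul_pow_lt_one hconv hbound hk hw)

end PowerSeries

/-- Bohr's theorem: if the power series converges and is bounded in modulus by 1
on the unit disk, then the series of absolute values is bounded by 1 for |z| < 1/3. -/
theorem bohr_theorem (c : ℕ → ℂ)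
    (hconv : ∀ z : ℂ, ‖z‖ < 1 → Summable (fun k => c k * z ^ k))
    (hbound : ∀ z : ℂ, ‖z‖ < 1 → ‖∑' k : ℕ, c k * z ^ k‖ < 1) :
    ∀ z : ℂ, ‖z‖ < 1 / 3 → ∃ s : ℝ, HasSum (fun k => ‖c k‖ * ‖z‖ ^ k) s ∧ s < 1 := by
  intro z hz
  have hr1 : ‖z‖ < 1 := by linarith
  have hs := summable_norm_mul_pow_of_lt_one hconv (norm_nonneg z) hr1
  refine ⟨_, hs.hasSum, ?_⟩
  have ha : ‖c 0‖ < 1 := by simpa [zero_pow_eq] using hbound 0 (by simp)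
  have hratio : ‖z‖ / (1 - ‖z‖) < 1 / 2 := by
    rw [div_lt_iff₀ (by linarith)]
    linarith
  calc ∑' k, ‖c k‖ * ‖z‖ ^ k ≤ ‖c 0‖ + (1 - ‖c 0‖ ^ 2) * (‖z‖ / (1 - ‖z‖)) :=
        tsum_mul_pow_le_add_of_le hs (norm_nonneg z) hr1 fun k hk =>
          norm_coeff_le_one_sub_sq hconv hbound hk
    _ < ‖c 0‖ + (1 - ‖c 0‖ ^ 2) * (1 / 2) := by
        gcongr
        nlinarith [norm_nonneg (c 0)]
    _ ≤ 1 := by nlinarith [sq_nonneg (1 - ‖c 0‖)]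
end

section
/- For any square-summable sequence of nonnegative reals (x_n)_{n≥1}, the double series ∑_{m=1}^∞ ∑_{n=1}^∞ x_m x_n/(m+n) satisfies ∑_{m,n} x_m x_n/(m+n) ≤ π ∑_n x_n². -/
/-!
Schur's proof. With the test weights `p n = (n + 1)^(-1/2)`, AM-GM gives
`2 x_m x_n / (m + n) ≤ w(m, n) x_m² + w(n, m) x_n²` with `w(m, n) = √m / (√n (m + n))`,
so the double sum is at most `sup_m ∑_n w(m, n) · ∑ x_n²`. Since `t ↦ √a / (√t (a + t))`
is decreasing with antiderivative `2 arctan √(t / a)`, each row sum is at most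
`2 arctan ∞ = π`.
-/

open Real Finset

lemma Real.sub_div_one_add_sq_le_arctan_sub {y z : ℝ} (hy : 0 ≤ y) (hyz : y ≤ z) :
    (z - y) / (1 + z ^ 2) ≤ arctan z - arctan y := by
  have hderiv : ∀ t ∈ interior (Set.Icc y z), 1 / (1 + z ^ 2) ≤ deriv arctan t := by
    rw [interior_Icc]
    rintro t ⟨hyt, htz⟩
    rw [deriv_arctan]
    apply one_div_le_one_div_of_le (by positivity)
    nlinarith
  simpa [div_eq_inv_mul] using (convex_Icc y z).mul_sub_le_image_sub_of_le_deriv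
    continuous_arctan.continuousOn differentiable_arctan.differentiableOn hderiv
    y (Set.left_mem_Icc.2 hyz) z (Set.right_mem_Icc.2 hyz) hyz

lemma one_le_two_mul_sqrt_add_one_mul_sub_sqrt {t : ℝ} (ht : 0 ≤ t) :
    1 ≤ 2 * √(t + 1) * (√(t + 1) - √t) := by
  have hamgm := two_mul_le_add_sq √(t + 1) √t
  rw [sq_sqrt (by positivity), sq_sqrt ht] at hamgm
  nlinarith [sq_sqrt (show 0 ≤ t + 1 by positivity)]

lemma sqrt_div_sqrt_add_one_mul_le_arctan_sub {a : ℝ} (ha : 0 < a) {t : ℝ} (ht : 0 ≤ t) :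
    √a / (√(t + 1) * (a + (t + 1))) ≤
      2 * arctan (√(t + 1) / √a) - 2 * arctan (√t / √a) := by
  have hs : 0 < √a := sqrt_pos.2 ha
  have hu : 0 < √(t + 1) := sqrt_pos.2 (by positivity)
  have hvu : √t / √a ≤ √(t + 1) / √a := by gcongr; linarith
  calc √a / (√(t + 1) * (a + (t + 1)))
      ≤ 2 * √a * (√(t + 1) - √t) / (a + (t + 1)) := by
        rw [div_le_div_iff₀ (by positivity) (by positivity)]
        have hgap := mul_le_mul_of_nonneg_left (one_le_two_mul_sqrt_add_one_mul_sub_sqrt ht)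
          (by positivity : 0 ≤ √a * (a + (t + 1)))
        linarith
    _ = 2 * ((√(t + 1) / √a - √t / √a) / (1 + (√(t + 1) / √a) ^ 2)) := by
        rw [div_pow, sq_sqrt ha.le, sq_sqrt (by positivity)]
        field_simp
        rw [sq_sqrt ha.le]
        ring
    _ ≤ _ := by linarith [sub_div_one_add_sq_le_arctan_sub (by positivity) hvu]

lemma sum_range_sqrt_div_sqrt_add_one_mul_le_pi {a : ℝ} (ha : 0 < a) (N : ℕ) :
    ∑ n ∈ range N, √a / (√((n : ℝ) + 1) * (a + ((n : ℝ) + 1))) ≤ π := by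
  set g : ℕ → ℝ := fun n => 2 * arctan (√(n : ℝ) / √a)
  calc ∑ n ∈ range N, √a / (√((n : ℝ) + 1) * (a + ((n : ℝ) + 1)))
      ≤ ∑ n ∈ range N, (g (n + 1) - g n) := by
        gcongr with n
        simpa [g] using sqrt_div_sqrt_add_one_mul_le_arctan_sub ha n.cast_nonneg
    _ = g N := by rw [sum_range_sub]; simp [g]
    _ ≤ π := by linarith [arctan_lt_pi_div_two (√(N : ℝ) / √a)]

lemma tsum_ofReal_sqrt_div_sqrt_add_one_mul_le_pi {a : ℝ} (ha : 0 < a) :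
    ∑' n : ℕ, ENNReal.ofReal (√a / (√((n : ℝ) + 1) * (a + ((n : ℝ) + 1)))) ≤
      ENNReal.ofReal π := by
  refine ENNReal.tsum_le_of_sum_range_le fun N => ?_
  rw [← ENNReal.ofReal_sum_of_nonneg fun n _ => by positivity]
  exact ENNReal.ofReal_le_ofReal (sum_range_sqrt_div_sqrt_add_one_mul_le_pi ha N)

lemma two_mul_mul_le_div_mul_sq_add_div_mul_sq {p q : ℝ} (hp : 0 < p) (hq : 0 < q) (a b : ℝ) :
    2 * a * b ≤ q / p * a ^ 2 + p / q * b ^ 2 := by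
  rw [div_mul_eq_mul_div, div_mul_eq_mul_div, div_add_div _ _ hp.ne' hq.ne',
    le_div_iff₀ (by positivity)]
  nlinarith [sq_nonneg (q * a - p * b)]

theorem tsum_tsum_ofReal_mul_le_of_schur_test {ι : Type*} {K : ι → ι → ℝ}
    (hK : ∀ m n, 0 ≤ K m n) (hsymm : ∀ m n, K m n = K n m) {p : ι → ℝ} (hp : ∀ n, 0 < p n)
    {C : ℝ} (hC : ∀ m, ∑' n, ENNReal.ofReal (K m n * p n / p m) ≤ ENNReal.ofReal C)
    {x : ι → ℝ} (hx : Summable fun n => x n ^ 2) :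
    ∑' m, ∑' n, ENNReal.ofReal (x m * x n * K m n) ≤
      ENNReal.ofReal (C * ∑' n, x n ^ 2) := by
  set B : ι → ι → ENNReal := fun m n =>
    ENNReal.ofReal (x m ^ 2) * ENNReal.ofReal (K m n * p n / p m)
  have hpointwise : ∀ m n, 2 * ENNReal.ofReal (x m * x n * K m n) ≤ B m n + B n m := by
    intro m n
    have hamgm := mul_le_mul_of_nonneg_left
      (two_mul_mul_le_div_mul_sq_add_div_mul_sq (hp m) (hp n) (x m) (x n)) (hK m n)
    have hweight : ∀ i j, 0 ≤ x i ^ 2 * (K i j * p j / p i) := fun i j =>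
      mul_nonneg (sq_nonneg _) (div_nonneg (mul_nonneg (hK i j) (hp j).le) (hp i).le)
    calc 2 * ENNReal.ofReal (x m * x n * K m n)
          = ENNReal.ofReal (2 * (x m * x n * K m n)) := by
          rw [ENNReal.ofReal_mul zero_le_two, ENNReal.ofReal_ofNat]
      _ ≤ ENNReal.ofReal
            (x m ^ 2 * (K m n * p n / p m) + x n ^ 2 * (K n m * p m / p n)) := by
          rw [hsymm n m]
          exact ENNReal.ofReal_le_ofReal (by linear_combination hamgm)
      _ = B m n + B n m := by
          rw [ENNReal.ofReal_add (hweight m n) (hweight n m), ENNReal.ofReal_mul (sq_nonneg _),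
            ENNReal.ofReal_mul (sq_nonneg _)]
  have hrow : ∀ m, ∑' n, B m n ≤ ENNReal.ofReal (x m ^ 2) * ENNReal.ofReal C := fun m => by
    simp only [B, ENNReal.tsum_mul_left]
    exact mul_le_mul_right (hC m) _
  rw [← ENNReal.mul_le_mul_iff_right two_ne_zero ENNReal.ofNat_ne_top, ← ENNReal.tsum_mul_left]
  calc ∑' m, 2 * ∑' n, ENNReal.ofReal (x m * x n * K m n)
      ≤ ∑' m, ∑' n, (B m n + B n m) := by
        gcongr with m
        rw [← ENNReal.tsum_mul_left]
        exact ENNReal.tsum_le_tsum (hpointwise m)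
    _ = 2 * ∑' m, ∑' n, B m n := by
        simp only [ENNReal.tsum_add]
        rw [ENNReal.tsum_comm (f := fun m n => B n m), two_mul]
    _ ≤ 2 * ∑' m, ENNReal.ofReal (x m ^ 2) * ENNReal.ofReal C := by
        gcongr with m
        exact hrow m
    _ = 2 * ENNReal.ofReal (C * ∑' n, x n ^ 2) := by
        rw [ENNReal.tsum_mul_right,
          ← ENNReal.ofReal_tsum_of_nonneg (fun n => sq_nonneg _) hx,
          ENNReal.ofReal_mul' (tsum_nonneg fun n => sq_nonneg _)]
        ring

/-- `x n` stands for x_{n+1}, so the sums run over the positive integers. -/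
theorem hilbert_inequality_sharp_constant_general (x : ℕ → ℝ)
    (hsq : Summable fun n => x n ^ 2) :
    (∑' m : ℕ, ∑' n : ℕ,
        ENNReal.ofReal (x m * x n / ((m : ℝ) + 1 + ((n : ℝ) + 1)))) ≤
      ENNReal.ofReal (Real.pi * ∑' n : ℕ, x n ^ 2) := by
  have hweight : ∀ m : ℕ, ∑' n : ℕ, ENNReal.ofReal
      (((m : ℝ) + 1 + ((n : ℝ) + 1))⁻¹ * (√((n : ℝ) + 1))⁻¹ / (√((m : ℝ) + 1))⁻¹) ≤
        ENNReal.ofReal π := fun m => by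
    convert tsum_ofReal_sqrt_div_sqrt_add_one_mul_le_pi (a := (m : ℝ) + 1) (by positivity)
      using 4 with n
    field_simp
  simpa only [div_eq_mul_inv] using tsum_tsum_ofReal_mul_le_of_schur_test
    (fun m n => by positivity) (fun m n => by rw [add_comm]) (fun n => by positivity) hweight hsq

/-- Hilbert's double series theorem with the sharp constant π. Here `x n`
denotes x_{n+1}, so the sums run over the positive integers. -/
theorem hilbert_inequality_sharp_constant (x : ℕ → ℝ) (hx : ∀ n, 0 ≤ x n)
    (hsq : Summable fun n => x n ^ 2) :
    (∑' m : ℕ, ∑' n : ℕ,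
        ENNReal.ofReal (x m * x n / ((m : ℝ) + 1 + ((n : ℝ) + 1)))) ≤
      ENNReal.ofReal (Real.pi * ∑' n : ℕ, x n ^ 2) :=
  hilbert_inequality_sharp_constant_general x hsq
end

section
/- There exists a finite constant C such that for every square-summable sequence of complex numbers (x_n)_{n≥1}, |∑_{m=1}^∞ ∑_{n=1}^∞ x_m x_n/(m+n)| ≤ C ∑_{n=1}^∞ |x_n|². -/
/-!
Schur's test with the weights `w n = (n + 1)^(-1/2)`: the weighted AM–GM inequality
`2 |x_m| |x_n| ≤ |x_m|² w_n / w_m + |x_n|² w_m / w_n` bounds the double series of absolute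
values by `C ∑ |x_n|²` as soon as the row sums satisfy `∑_n w_n / (m + n + 2) ≤ C w_m`.
For the Hilbert kernel this holds with `C = 4`, by telescoping each term against
`(√n + √(m + 1))⁻¹`. Absolute summability then also justifies summing the double series
over `ℕ × ℕ`.
-/

lemma two_mul_le_sq_div_mul_add_sq_div_mul {u v : ℝ} (hu : 0 < u) (hv : 0 < v) (a b : ℝ) :
    2 * (a * b) ≤ a ^ 2 / u * v + b ^ 2 / v * u := by
  rw [div_mul_eq_mul_div, div_mul_eq_mul_div, div_add_div _ _ hu.ne' hv.ne',
    le_div_iff₀ (by positivity)]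
  nlinarith [two_mul_le_add_sq (a * v) (b * u)]

section SchurTest

variable {ι : Type*} {K : ι → ι → ℝ} {w a : ι → ℝ} {C : ℝ}

lemma summable_and_tsum_le_of_row_bound (hK : ∀ m n, 0 ≤ K m n) (hw : ∀ n, 0 < w n)
    (hrow : ∀ m, Summable fun n => K m n * w n) (hbound : ∀ m, ∑' n, K m n * w n ≤ C * w m)
    (ha : Summable fun n => a n ^ 2) :
    Summable (fun p : ι × ι => a p.1 ^ 2 / w p.1 * (K p.1 p.2 * w p.2)) ∧
      ∑' p : ι × ι, a p.1 ^ 2 / w p.1 * (K p.1 p.2 * w p.2) ≤ C * ∑' n, a n ^ 2 := by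
  have hnonneg : 0 ≤ fun p : ι × ι => a p.1 ^ 2 / w p.1 * (K p.1 p.2 * w p.2) := fun p =>
    mul_nonneg (div_nonneg (sq_nonneg _) (hw p.1).le) (mul_nonneg (hK p.1 p.2) (hw p.2).le)
  have hfiber : ∀ m, ∑' n, a m ^ 2 / w m * (K m n * w n) ≤ C * a m ^ 2 := fun m => by
    rw [tsum_mul_left]
    calc a m ^ 2 / w m * ∑' n, K m n * w n ≤ a m ^ 2 / w m * (C * w m) :=
          mul_le_mul_of_nonneg_left (hbound m) (div_nonneg (sq_nonneg _) (hw m).le)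
      _ = C * a m ^ 2 := by field_simp [(hw m).ne']
  have hrow' : ∀ m, Summable fun n => a m ^ 2 / w m * (K m n * w n) :=
    fun m => (hrow m).mul_left _
  have houter : Summable fun m => ∑' n, a m ^ 2 / w m * (K m n * w n) :=
    (ha.mul_left C).of_nonneg_of_le (fun m => tsum_nonneg fun n => hnonneg (m, n)) hfiber
  have hsum := (summable_prod_of_nonneg hnonneg).2 ⟨hrow', houter⟩
  refine ⟨hsum, ?_⟩
  rw [hsum.tsum_prod' hrow', ← tsum_mul_left]
  exact houter.tsum_le_tsum hfiber (ha.mul_left C)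

theorem summable_and_tsum_kernel_mul_le (hK : ∀ m n, 0 ≤ K m n) (hsymm : ∀ m n, K m n = K n m)
    (hw : ∀ n, 0 < w n) (hrow : ∀ m, Summable fun n => K m n * w n)
    (hbound : ∀ m, ∑' n, K m n * w n ≤ C * w m) (ha0 : ∀ n, 0 ≤ a n)
    (ha : Summable fun n => a n ^ 2) :
    Summable (fun p : ι × ι => K p.1 p.2 * a p.1 * a p.2) ∧
      ∑' p : ι × ι, K p.1 p.2 * a p.1 * a p.2 ≤ C * ∑' n, a n ^ 2 := by
  obtain ⟨hU, hU_le⟩ := summable_and_tsum_le_of_row_bound hK hw hrow hbound ha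
  set U : ι × ι → ℝ := fun p => a p.1 ^ 2 / w p.1 * (K p.1 p.2 * w p.2)
  have hUswap : ∑' p : ι × ι, U p.swap = ∑' p, U p := (Equiv.prodComm ι ι).tsum_eq U
  have hle : ∀ p : ι × ι, 2 * (K p.1 p.2 * a p.1 * a p.2) ≤ U p + U p.swap := fun p => by
    calc 2 * (K p.1 p.2 * a p.1 * a p.2) = K p.1 p.2 * (2 * (a p.1 * a p.2)) := by ring
      _ ≤ K p.1 p.2 * (a p.1 ^ 2 / w p.1 * w p.2 + a p.2 ^ 2 / w p.2 * w p.1) :=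
        mul_le_mul_of_nonneg_left
          (two_mul_le_sq_div_mul_add_sq_div_mul (hw p.1) (hw p.2) _ _) (hK _ _)
      _ = U p + U p.swap := by simp only [U, Prod.fst_swap, Prod.snd_swap, hsymm p.2 p.1]; ring
  have hnonneg : ∀ p : ι × ι, 0 ≤ 2 * (K p.1 p.2 * a p.1 * a p.2) := fun p =>
    mul_nonneg zero_le_two (mul_nonneg (mul_nonneg (hK _ _) (ha0 _)) (ha0 _))
  have hsum2 : Summable fun p : ι × ι => 2 * (K p.1 p.2 * a p.1 * a p.2) :=
    (hU.add hU.prod_symm).of_nonneg_of_le hnonneg hle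
  refine ⟨(summable_mul_left_iff two_ne_zero).1 hsum2, ?_⟩
  have := hsum2.tsum_le_tsum hle (hU.add hU.prod_symm)
  rw [tsum_mul_left, hU.tsum_add hU.prod_symm, hUswap] at this
  linarith

end SchurTest

noncomputable def hilbertKernel (m n : ℕ) : ℝ := ((m : ℝ) + 1 + ((n : ℝ) + 1))⁻¹

lemma hilbertKernel_nonneg (m n : ℕ) : 0 ≤ hilbertKernel m n := by
  unfold hilbertKernel; positivity

lemma hilbertKernel_comm (m n : ℕ) : hilbertKernel m n = hilbertKernel n m := by
  unfold hilbertKernel; ring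

/-- Discrete form of `1 / ((r² + s) √s) ≤ -4 d/ds (√s + r)⁻¹`, with `p = √(s - 1)`, `q = √s`. -/
lemma inv_mul_inv_le_four_mul_sub {p q r : ℝ} (hp : 0 ≤ p) (hq : 0 < q) (hr : 0 < r)
    (hpq : q ^ 2 = p ^ 2 + 1) :
    (r ^ 2 + q ^ 2)⁻¹ * q⁻¹ ≤ 4 * ((p + r)⁻¹ - (q + r)⁻¹) := by
  have hpq' : p ≤ q := by nlinarith
  have h1 : 1 ≤ 2 * q * (q - p) := by nlinarith
  have h2 : (p + r) * (q + r) ≤ 2 * (r ^ 2 + q ^ 2) := by nlinarith [sq_nonneg (q - r)]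
  rw [inv_sub_inv (by positivity) (by positivity), ← mul_inv, show q + r - (p + r) = q - p by ring,
    mul_div_assoc', le_div_iff₀ (by positivity), inv_mul_eq_div, div_le_iff₀ (by positivity)]
  nlinarith

lemma hilbertKernel_mul_inv_sqrt_le (m n : ℕ) :
    hilbertKernel m n * (√((n : ℝ) + 1))⁻¹ ≤
      4 * ((√(n : ℝ) + √((m : ℝ) + 1))⁻¹ - (√((n + 1 : ℕ) : ℝ) + √((m : ℝ) + 1))⁻¹) := by
  have key := inv_mul_inv_le_four_mul_sub (Real.sqrt_nonneg (n : ℝ))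
    (Real.sqrt_pos.2 (by positivity : (0 : ℝ) < n + 1))
    (Real.sqrt_pos.2 (by positivity : (0 : ℝ) < m + 1))
    (by rw [Real.sq_sqrt (by positivity), Real.sq_sqrt (by positivity)])
  rw [Real.sq_sqrt (by positivity), Real.sq_sqrt (by positivity)] at key
  simpa [hilbertKernel] using key

lemma sum_range_hilbertKernel_mul_inv_sqrt_le (m N : ℕ) :
    ∑ n ∈ Finset.range N, hilbertKernel m n * (√((n : ℝ) + 1))⁻¹ ≤ 4 * (√((m : ℝ) + 1))⁻¹ := by
  set u : ℕ → ℝ := fun k => (√(k : ℝ) + √((m : ℝ) + 1))⁻¹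
  calc ∑ n ∈ Finset.range N, hilbertKernel m n * (√((n : ℝ) + 1))⁻¹
      ≤ ∑ n ∈ Finset.range N, 4 * (u n - u (n + 1)) :=
        Finset.sum_le_sum fun n _ => hilbertKernel_mul_inv_sqrt_le m n
    _ = 4 * (u 0 - u N) := by rw [← Finset.mul_sum, Finset.sum_range_sub']
    _ ≤ 4 * (√((m : ℝ) + 1))⁻¹ := by
        have : 0 ≤ u N := by positivity
        simp only [u, Nat.cast_zero, Real.sqrt_zero, zero_add]
        linarith

lemma summable_hilbertKernel_mul_inv_sqrt (m : ℕ) :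
    Summable fun n : ℕ => hilbertKernel m n * (√((n : ℝ) + 1))⁻¹ :=
  summable_of_sum_range_le (fun n => mul_nonneg (hilbertKernel_nonneg m n) (by positivity))
    (sum_range_hilbertKernel_mul_inv_sqrt_le m)

lemma tsum_hilbertKernel_mul_inv_sqrt_le (m : ℕ) :
    ∑' n : ℕ, hilbertKernel m n * (√((n : ℝ) + 1))⁻¹ ≤ 4 * (√((m : ℝ) + 1))⁻¹ :=
  Real.tsum_le_of_sum_range_le (fun n => mul_nonneg (hilbertKernel_nonneg m n) (by positivity))
    (sum_range_hilbertKernel_mul_inv_sqrt_le m)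

lemma norm_mul_div_eq_hilbertKernel_mul (a b : ℂ) (m n : ℕ) :
    ‖a * b / ((m : ℂ) + 1 + ((n : ℂ) + 1))‖ = hilbertKernel m n * ‖a‖ * ‖b‖ := by
  have hcast : (m : ℂ) + 1 + ((n : ℂ) + 1) = (((m : ℝ) + 1 + ((n : ℝ) + 1) : ℝ) : ℂ) := by
    push_cast; ring
  rw [hcast, norm_div, norm_mul, Complex.norm_real, Real.norm_of_nonneg (by positivity),
    hilbertKernel]
  ring

/-- Hilbert's double series theorem, boundedness form: there is a finite constant C
bounding the double series for every square-summable complex sequence. Here `x n`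
denotes x_{n+1}, so the sums run over the positive integers. -/
theorem hilbert_inequality_bounded :
    ∃ C : ℝ, ∀ x : ℕ → ℂ, Summable (fun n => ‖x n‖ ^ 2) →
      ‖∑' m : ℕ, ∑' n : ℕ, x m * x n / ((m : ℂ) + 1 + ((n : ℂ) + 1))‖ ≤
        C * ∑' n : ℕ, ‖x n‖ ^ 2 := by
  refine ⟨4, fun x hx => ?_⟩
  obtain ⟨hsum, hle⟩ := summable_and_tsum_kernel_mul_le hilbertKernel_nonneg hilbertKernel_comm
    (fun n => by positivity) summable_hilbertKernel_mul_inv_sqrt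
    tsum_hilbertKernel_mul_inv_sqrt_le (fun n => norm_nonneg (x n)) hx
  set F : ℕ × ℕ → ℂ := fun p => x p.1 * x p.2 / ((p.1 : ℂ) + 1 + ((p.2 : ℂ) + 1))
  have hF : ∀ p, ‖F p‖ = hilbertKernel p.1 p.2 * ‖x p.1‖ * ‖x p.2‖ := fun p =>
    norm_mul_div_eq_hilbertKernel_mul _ _ p.1 p.2
  have hF_norm : Summable fun p => ‖F p‖ := by simpa only [hF] using hsum
  calc ‖∑' m : ℕ, ∑' n : ℕ, x m * x n / ((m : ℂ) + 1 + ((n : ℂ) + 1))‖ = ‖∑' p, F p‖ := by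
        rw [hF_norm.of_norm.tsum_prod]
    _ ≤ ∑' p, ‖F p‖ := norm_tsum_le_tsum_norm hF_norm
    _ = ∑' p : ℕ × ℕ, hilbertKernel p.1 p.2 * ‖x p.1‖ * ‖x p.2‖ := tsum_congr hF
    _ ≤ 4 * ∑' n, ‖x n‖ ^ 2 := hle
end

section
/- The constant π in Hilbert's inequality is sharp: for every C < π there exists a square-summable sequence of nonnegative reals (x_n) with ∑_{m,n} x_m x_n/(m+n) > C ∑_n x_n². -/
/-!
Test the form on the truncated sequence `x_n = n^(-1/2)` for `1 ≤ n ≤ N`, for which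
`∑ x_n² = H_N → ∞`. The inner sum over `n` dominates `∫₁^(N+1) dt / (√t (m + t))`, whose
antiderivative is `(2/√m) arctan √(t/m)`; with `arctan y + arctan y⁻¹ = π/2` and
`arctan y ≤ y`, row `m` contributes at least `π/m - 2/√(m(N+1)) - 2 m^(-3/2)`. Summing over
`m ≤ N` gives at least `π H_N - 4 - 2 ζ(3/2)`, which exceeds `C H_N` for large `N` when `C < π`.
-/

open Real Finset Filter

theorem Real.arctan_le_self {x : ℝ} (hx : 0 ≤ x) : arctan x ≤ x :=
  calc arctan x ≤ tan (arctan x) := le_tan (arctan_nonneg.2 hx) (arctan_lt_pi_div_two x)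
    _ = x := tan_arctan x

theorem sub_le_sum_of_hasDerivAt_of_antitoneOn {F f : ℝ → ℝ} {x₀ : ℝ} {N : ℕ}
    (hF : ∀ t ∈ Set.Icc x₀ (x₀ + N), HasDerivAt F (f t) t)
    (hf : AntitoneOn f (Set.Icc x₀ (x₀ + N))) :
    F (x₀ + N) - F x₀ ≤ ∑ k ∈ range N, f (x₀ + k) := by
  have hI : Set.uIcc x₀ (x₀ + N) = Set.Icc x₀ (x₀ + N) := Set.uIcc_of_le (by simp)
  rw [← intervalIntegral.integral_eq_sub_of_hasDerivAt (hI ▸ hF) (hI ▸ hf).intervalIntegrable]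
  exact hf.integral_le_sum

theorem hasDerivAt_arctan_sqrt_div_sqrt {a t : ℝ} (ha : 0 < a) (ht : 0 < t) :
    HasDerivAt (fun s => 2 / √a * arctan (√s / √a)) (1 / (√t * (a + t))) t := by
  have h := (((hasDerivAt_sqrt ht.ne').div_const √a).arctan).const_mul (2 / √a)
  refine h.congr_deriv ?_
  have hsa : √a ^ 2 = a := sq_sqrt ha.le
  have hst : √t ^ 2 = t := sq_sqrt ht.le
  have : 0 < √a := sqrt_pos.2 ha
  have : 0 < √t := sqrt_pos.2 ht
  rw [div_pow, hsa, hst]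
  field_simp
  exact hsa.symm

theorem antitoneOn_inv_sqrt_mul_add {a : ℝ} (ha : 0 ≤ a) :
    AntitoneOn (fun t => 1 / (√t * (a + t))) (Set.Ioi 0) := by
  intro s (hs : 0 < s) t _ hst
  have : 0 < √s := sqrt_pos.2 hs
  dsimp only
  gcongr

theorem arctan_sub_le_sum_inv_sqrt {a : ℝ} (ha : 0 < a) (N : ℕ) :
    2 / √a * (arctan (√(N + 1) / √a) - arctan (1 / √a)) ≤
      ∑ n ∈ range N, 1 / (√(n + 1) * (a + (n + 1))) := by
  have hpos : Set.Icc (1 : ℝ) (1 + N) ⊆ Set.Ioi 0 := fun t ht => zero_lt_one.trans_le ht.1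
  have h := sub_le_sum_of_hasDerivAt_of_antitoneOn (x₀ := 1) (N := N)
    (fun t ht => hasDerivAt_arctan_sqrt_div_sqrt ha (hpos ht))
    ((antitoneOn_inv_sqrt_mul_add ha.le).mono hpos)
  simp only [sqrt_one] at h
  rw [mul_sub]
  convert h using 3 <;> ring_nf

theorem pi_div_sub_le_sum_hilbert_row {a : ℝ} (ha : 0 < a) (N : ℕ) :
    π / a - 2 / (√a * √(N + 1)) - 2 / (a * √a) ≤
      ∑ n ∈ range N, 1 / √a * (1 / √(n + 1)) / (a + (n + 1)) := by
  have hsa : 0 < √a := sqrt_pos.2 ha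
  have harctan_inv : arctan (√(N + 1) / √a) = π / 2 - arctan (√a / √(N + 1)) := by
    rw [← arctan_inv_of_pos (by positivity), inv_div]
  have hupper : arctan (√a / √(N + 1)) ≤ √a / √(N + 1) := arctan_le_self (by positivity)
  have hlower : arctan (1 / √a) ≤ 1 / √a := arctan_le_self (by positivity)
  have hrow := mul_le_mul_of_nonneg_left (arctan_sub_le_sum_inv_sqrt ha N)
    (one_div_nonneg.2 hsa.le)
  rw [mul_sum] at hrow
  have hsq : √a * √a = a := mul_self_sqrt ha.le
  calc π / a - 2 / (√a * √(N + 1)) - 2 / (a * √a)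
      = π / a - 2 / a * (√a / √(N + 1)) - 2 / a * (1 / √a) := by
        field_simp
        linear_combination 2 * hsq
    _ ≤ π / a - 2 / a * arctan (√a / √(N + 1)) - 2 / a * arctan (1 / √a) := by gcongr
    _ = 1 / √a * (2 / √a * (arctan (√(N + 1) / √a) - arctan (1 / √a))) := by
        have hscale : 1 / √a * (2 / √a) = 2 / a := by rw [div_mul_div_comm, one_mul, hsq]
        rw [harctan_inv, ← mul_assoc, hscale]
        ring
    _ ≤ _ := hrow.trans_eq (sum_congr rfl fun n _ => by field_simp)

theorem sum_range_inv_sqrt_succ_le (N : ℕ) : ∑ m ∈ range N, 1 / √((m : ℝ) + 1) ≤ 2 * √N := by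
  have hstep : ∀ m : ℕ, 1 / √((m : ℝ) + 1) ≤ 2 * √((m + 1 : ℕ) : ℝ) - 2 * √(m : ℝ) := by
    intro m
    push_cast
    have h1 : 0 < √((m : ℝ) + 1) := sqrt_pos.2 (by positivity)
    have h2 : √(m : ℝ) ≤ √((m : ℝ) + 1) := sqrt_le_sqrt (by linarith)
    have h3 : √((m : ℝ) + 1) ^ 2 = m + 1 := sq_sqrt (by positivity)
    have h4 : √(m : ℝ) ^ 2 = m := sq_sqrt (by positivity)
    rw [div_le_iff₀ h1]
    nlinarith
  calc ∑ m ∈ range N, 1 / √((m : ℝ) + 1)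
      ≤ ∑ m ∈ range N, (2 * √((m + 1 : ℕ) : ℝ) - 2 * √(m : ℝ)) := sum_le_sum fun m _ => hstep m
    _ = 2 * √N := by rw [sum_range_sub (fun m : ℕ => 2 * √(m : ℝ))]; simp

theorem summable_one_div_mul_sqrt :
    Summable fun m : ℕ => 1 / (((m : ℝ) + 1) * √((m : ℝ) + 1)) := by
  have h := (summable_nat_add_iff 1).2
    (summable_nat_rpow_inv.2 (by norm_num : (1 : ℝ) < 3 / 2))
  refine h.congr fun m => ?_
  push_cast
  rw [one_div, sqrt_eq_rpow, ← rpow_one_add' (by positivity) (by norm_num)]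
  norm_num

theorem pi_mul_harmonic_sub_le_sum_hilbert (N : ℕ) :
    π * ∑ m ∈ range N, 1 / ((m : ℝ) + 1) - 4 - 2 * ∑' m : ℕ, 1 / (((m : ℝ) + 1) * √((m : ℝ) + 1)) ≤
      ∑ m ∈ range N, ∑ n ∈ range N,
        1 / √((m : ℝ) + 1) * (1 / √((n : ℝ) + 1)) / ((m : ℝ) + 1 + ((n : ℝ) + 1)) := by
  have hupper : 2 / √((N : ℝ) + 1) * ∑ m ∈ range N, 1 / √((m : ℝ) + 1) ≤ 4 := by
    have hN : 2 * √(N : ℝ) ≤ 2 * √((N : ℝ) + 1) := by gcongr; linarith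
    calc 2 / √((N : ℝ) + 1) * ∑ m ∈ range N, 1 / √((m : ℝ) + 1)
        ≤ 2 / √((N : ℝ) + 1) * (2 * √((N : ℝ) + 1)) := by
          gcongr
          exact (sum_range_inv_sqrt_succ_le N).trans hN
      _ = 4 := by field_simp; norm_num
  have hlower : ∑ m ∈ range N, 1 / (((m : ℝ) + 1) * √((m : ℝ) + 1)) ≤
      ∑' m : ℕ, 1 / (((m : ℝ) + 1) * √((m : ℝ) + 1)) :=
    summable_one_div_mul_sqrt.sum_le_tsum _ fun _ _ => by positivity
  calc π * ∑ m ∈ range N, 1 / ((m : ℝ) + 1) - 4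
        - 2 * ∑' m : ℕ, 1 / (((m : ℝ) + 1) * √((m : ℝ) + 1))
      ≤ π * ∑ m ∈ range N, 1 / ((m : ℝ) + 1)
        - 2 / √((N : ℝ) + 1) * ∑ m ∈ range N, 1 / √((m : ℝ) + 1)
        - 2 * ∑ m ∈ range N, 1 / (((m : ℝ) + 1) * √((m : ℝ) + 1)) := by linarith
    _ = ∑ m ∈ range N, (π / ((m : ℝ) + 1) - 2 / (√((m : ℝ) + 1) * √((N : ℝ) + 1))
          - 2 / (((m : ℝ) + 1) * √((m : ℝ) + 1))) := by
        simp only [sum_sub_distrib, mul_sum]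
        ring_nf
    _ ≤ _ := sum_le_sum fun m _ => pi_div_sub_le_sum_hilbert_row (by positivity) N

noncomputable def hilbertTestSeq (N : ℕ) (n : ℕ) : ℝ := if n < N then 1 / √((n : ℝ) + 1) else 0

theorem hilbertTestSeq_nonneg (N n : ℕ) : 0 ≤ hilbertTestSeq N n := by
  unfold hilbertTestSeq; split_ifs <;> positivity

theorem hilbertTestSeq_eq_zero {N n : ℕ} (hn : n ∉ range N) : hilbertTestSeq N n = 0 :=
  if_neg (by simpa using hn)

theorem summable_hilbertTestSeq_sq (N : ℕ) : Summable fun n => hilbertTestSeq N n ^ 2 :=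
  summable_of_ne_finset_zero (s := range N) fun n hn => by
    rw [hilbertTestSeq_eq_zero hn, zero_pow two_ne_zero]

theorem tsum_hilbertTestSeq_sq (N : ℕ) :
    ∑' n, hilbertTestSeq N n ^ 2 = ∑ n ∈ range N, 1 / ((n : ℝ) + 1) := by
  rw [tsum_eq_sum fun n hn => by rw [hilbertTestSeq_eq_zero hn, zero_pow two_ne_zero]]
  refine sum_congr rfl fun n hn => ?_
  rw [hilbertTestSeq, if_pos (mem_range.1 hn), div_pow, one_pow, sq_sqrt (by positivity)]

theorem tsum_tsum_hilbertTestSeq (N : ℕ) :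
    ∑' m, ∑' n, hilbertTestSeq N m * hilbertTestSeq N n / ((m : ℝ) + 1 + ((n : ℝ) + 1)) =
      ∑ m ∈ range N, ∑ n ∈ range N,
        1 / √((m : ℝ) + 1) * (1 / √((n : ℝ) + 1)) / ((m : ℝ) + 1 + ((n : ℝ) + 1)) := by
  rw [tsum_eq_sum fun m hm => by
    rw [hilbertTestSeq_eq_zero hm]; simp only [zero_mul, zero_div, tsum_zero]]
  refine sum_congr rfl fun m hm => ?_
  rw [tsum_eq_sum fun n hn => by rw [hilbertTestSeq_eq_zero hn, mul_zero, zero_div]]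
  refine sum_congr rfl fun n hn => ?_
  rw [hilbertTestSeq, hilbertTestSeq, if_pos (mem_range.1 hm), if_pos (mem_range.1 hn)]

/-- Sharpness of the constant π in Hilbert's inequality. Here `x n`
denotes x_{n+1}, so the sums run over the positive integers. -/
theorem hilbert_inequality_pi_sharp :
    ∀ C : ℝ, C < Real.pi →
      ∃ x : ℕ → ℝ, (∀ n, 0 ≤ x n) ∧ (Summable fun n => x n ^ 2) ∧
        C * ∑' n : ℕ, x n ^ 2 <
          ∑' m : ℕ, ∑' n : ℕ, x m * x n / ((m : ℝ) + 1 + ((n : ℝ) + 1)) := by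
  intro C hC
  set B := ∑' m : ℕ, 1 / (((m : ℝ) + 1) * √((m : ℝ) + 1))
  obtain ⟨N, hN⟩ := (tendsto_sum_range_one_div_nat_succ_atTop.eventually_gt_atTop
    ((4 + 2 * B) / (π - C))).exists
  rw [div_lt_iff₀ (sub_pos.2 hC)] at hN
  refine ⟨hilbertTestSeq N, hilbertTestSeq_nonneg N, summable_hilbertTestSeq_sq N, ?_⟩
  rw [tsum_hilbertTestSeq_sq, tsum_tsum_hilbertTestSeq]
  linarith [pi_mul_harmonic_sub_le_sum_hilbert N]
end

section
/- If a decreasing sequence of positive reals (x_n)_{n≥1} is square-summable, then the double series ∑_{m=1}^∞ ∑_{n=1}^∞ x_m x_n/(m+n) converges. -/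
/-!
Schur's test with the weights `w n = 1 / √(n + 1)`. By weighted AM–GM,
`2 |x m * x n| ≤ x m ^ 2 * w n / w m + x n ^ 2 * w m / w n`, so the double series is dominated by
`∑ₘ x m ^ 2 * (∑ₙ K m n * w n) / w m` and its mirror image, where `K m n = 1 / (m + n + 2)`.
It therefore suffices that every row sum `∑ₙ K m n * w n` is at most `4 * w m`: split at `n = m`,
the terms with `n ≤ m` contribute at most `(m + 1)⁻¹ * ∑_{n ≤ m} (n + 1)^(-1/2) ≤ 2 / √(m + 1)` and the
tail at most `∑_{n > m} (n + 1)^(-3/2) ≤ 2 / √(m + 1)`, both sums being estimated by telescoping.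
-/

open Finset Real

theorem abs_mul_mul_le_weighted_amgm {a b k u v : ℝ} (hk : 0 ≤ k) (hu : 0 < u) (hv : 0 < v) :
    |a * b * k| ≤ (a ^ 2 * (k * v / u) + b ^ 2 * (k * u / v)) / 2 := by
  have hamgm : 2 * (|a| * v) * (|b| * u) ≤ (|a| * v) ^ 2 + (|b| * u) ^ 2 :=
    two_mul_le_add_sq _ _
  rw [abs_mul, abs_mul, abs_of_nonneg hk, ← sq_abs a, ← sq_abs b]
  field_simp
  nlinarith [mul_le_mul_of_nonneg_left hamgm hk]

section SchurTest

variable {x w : ℕ → ℝ} {K : ℕ → ℕ → ℝ} {C : ℝ}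

theorem summable_sq_mul_of_schur_row_bound (hK : ∀ m n, 0 ≤ K m n) (hw : ∀ n, 0 < w n)
    (hrow : ∀ m N, ∑ n ∈ range N, K m n * w n ≤ C * w m) (hx : Summable fun n => x n ^ 2) :
    Summable fun p : ℕ × ℕ => x p.1 ^ 2 * (K p.1 p.2 * w p.2 / w p.1) := by
  have hrow' : ∀ m N, ∑ n ∈ range N, K m n * w n / w m ≤ C := fun m N => by
    rw [← sum_div, div_le_iff₀ (hw m)]
    exact hrow m N
  have hnonneg : ∀ m n, 0 ≤ K m n * w n / w m := fun m n =>
    div_nonneg (mul_nonneg (hK m n) (hw n).le) (hw m).le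
  have hrowsum : ∀ m, Summable fun n => K m n * w n / w m := fun m =>
    summable_of_sum_range_le (hnonneg m) (hrow' m)
  have hterm : 0 ≤ fun p : ℕ × ℕ => x p.1 ^ 2 * (K p.1 p.2 * w p.2 / w p.1) := fun p =>
    mul_nonneg (sq_nonneg _) (hnonneg p.1 p.2)
  rw [summable_prod_of_nonneg hterm]
  refine ⟨fun m => (hrowsum m).mul_left (x m ^ 2), ?_⟩
  simp only [tsum_mul_left]
  refine (hx.mul_right C).of_nonneg_of_le
    (fun m => mul_nonneg (sq_nonneg _) (tsum_nonneg (hnonneg m))) fun m => ?_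
  exact mul_le_mul_of_nonneg_left (Real.tsum_le_of_sum_range_le (hnonneg m) (hrow' m))
    (sq_nonneg _)

theorem summable_mul_mul_of_schur_test (hK : ∀ m n, 0 ≤ K m n) (hKsymm : ∀ m n, K m n = K n m)
    (hw : ∀ n, 0 < w n) (hrow : ∀ m N, ∑ n ∈ range N, K m n * w n ≤ C * w m)
    (hx : Summable fun n => x n ^ 2) :
    Summable fun p : ℕ × ℕ => x p.1 * x p.2 * K p.1 p.2 := by
  have hleft := summable_sq_mul_of_schur_row_bound hK hw hrow hx
  have hright : Summable fun p : ℕ × ℕ => x p.2 ^ 2 * (K p.1 p.2 * w p.1 / w p.2) := by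
    simpa only [Function.comp_def, Equiv.prodComm_apply, Prod.fst_swap, Prod.snd_swap, hKsymm]
      using (Equiv.prodComm ℕ ℕ).summable_iff.2 hleft
  exact ((hleft.add hright).div_const 2).of_norm_bounded fun p =>
    abs_mul_mul_le_weighted_amgm (hK p.1 p.2) (hw p.1) (hw p.2)

end SchurTest

theorem inv_sqrt_add_one_le_two_mul_sqrt_sub {t : ℝ} (ht : 0 ≤ t) :
    (√(t + 1))⁻¹ ≤ 2 * (√(t + 1) - √t) := by
  have hs : 0 < √(t + 1) := sqrt_pos.2 (by linarith)
  have hs2 : √(t + 1) ^ 2 = t + 1 := sq_sqrt (by linarith)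
  have hr2 : √t ^ 2 = t := sq_sqrt ht
  rw [inv_le_iff_one_le_mul₀ hs]
  nlinarith [sq_nonneg (√(t + 1) - √t)]

theorem inv_mul_sqrt_add_one_le_two_mul_inv_sqrt_sub {t : ℝ} (ht : 0 < t) :
    ((t + 1) * √(t + 1))⁻¹ ≤ 2 * ((√t)⁻¹ - (√(t + 1))⁻¹) := by
  have hr : 0 < √t := sqrt_pos.2 ht
  have hs : 0 < √(t + 1) := sqrt_pos.2 (by linarith)
  have hs2 : √(t + 1) ^ 2 = t + 1 := sq_sqrt (by linarith)
  have hr2 : √t ^ 2 = t := sq_sqrt ht.le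
  have hrs : √t ≤ √(t + 1) := sqrt_le_sqrt (by linarith)
  rw [inv_sub_inv hr.ne' hs.ne', ← mul_div_assoc, le_div_iff₀ (by positivity),
    inv_mul_le_iff₀ (by positivity)]
  nlinarith [mul_pos hr hs, mul_le_mul_of_nonneg_left hrs hs.le, mul_le_mul_of_nonneg_left hrs hr.le]

theorem sum_range_inv_sqrt_add_one_le (N : ℕ) :
    ∑ n ∈ range N, (√((n : ℝ) + 1))⁻¹ ≤ 2 * √N := by
  have htel := sum_range_sub (fun n : ℕ => √(n : ℝ)) N
  push_cast at htel
  calc ∑ n ∈ range N, (√((n : ℝ) + 1))⁻¹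
      ≤ ∑ n ∈ range N, 2 * (√((n : ℝ) + 1) - √n) :=
        sum_le_sum fun n _ => inv_sqrt_add_one_le_two_mul_sqrt_sub n.cast_nonneg
    _ = 2 * √N := by rw [← mul_sum, htel, sqrt_zero, sub_zero]

theorem sum_Ico_inv_mul_sqrt_add_one_le {m : ℕ} (hm : 0 < m) (N : ℕ) :
    ∑ n ∈ Ico m N, (((n : ℝ) + 1) * √((n : ℝ) + 1))⁻¹ ≤ 2 * (√m)⁻¹ := by
  rcases le_or_gt m N with hmN | hNm
  · have htel := sum_Ico_sub (fun n : ℕ => -(√(n : ℝ))⁻¹) hmN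
    push_cast at htel
    simp only [neg_sub_neg] at htel
    calc ∑ n ∈ Ico m N, (((n : ℝ) + 1) * √((n : ℝ) + 1))⁻¹
        ≤ ∑ n ∈ Ico m N, 2 * ((√(n : ℝ))⁻¹ - (√((n : ℝ) + 1))⁻¹) :=
          sum_le_sum fun n hn => inv_mul_sqrt_add_one_le_two_mul_inv_sqrt_sub
            (by exact_mod_cast hm.trans_le (mem_Ico.1 hn).1)
      _ ≤ 2 * (√m)⁻¹ := by
          rw [← mul_sum]
          linarith [inv_nonneg.2 (sqrt_nonneg (N : ℝ))]
  · simp only [Ico_eq_empty_of_le hNm.le, sum_empty]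
    positivity

theorem sum_range_inv_add_mul_inv_sqrt_le (m N : ℕ) :
    ∑ n ∈ range N, ((m : ℝ) + 1 + ((n : ℝ) + 1))⁻¹ * (√((n : ℝ) + 1))⁻¹
      ≤ 4 * (√((m : ℝ) + 1))⁻¹ := by
  have hm : (0 : ℝ) < (m : ℝ) + 1 := by positivity
  rw [← sum_filter_add_sum_filter_not (range N) (· ≤ m)]
  have hsmall : ∑ n ∈ range N with n ≤ m, ((m : ℝ) + 1 + ((n : ℝ) + 1))⁻¹ * (√((n : ℝ) + 1))⁻¹
      ≤ 2 * (√((m : ℝ) + 1))⁻¹ :=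
    calc _ ≤ ∑ n ∈ range (m + 1), ((m : ℝ) + 1)⁻¹ * (√((n : ℝ) + 1))⁻¹ := by
          refine sum_le_sum_of_subset_of_nonneg (fun n hn => ?_) (fun n _ _ => by positivity)
            |>.trans' (sum_le_sum fun n _ => ?_)
          · simp only [mem_filter, mem_range] at hn ⊢
            omega
          · refine mul_le_mul_of_nonneg_right (inv_anti₀ hm ?_) (by positivity)
            linarith [n.cast_nonneg (α := ℝ)]
      _ ≤ ((m : ℝ) + 1)⁻¹ * (2 * √((m : ℝ) + 1)) := by
          rw [← mul_sum]
          gcongr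
          exact_mod_cast sum_range_inv_sqrt_add_one_le (m + 1)
      _ = 2 * (√((m : ℝ) + 1))⁻¹ := by
          rw [mul_left_comm, inv_mul_eq_div, sqrt_div_self]
  have hlarge : ∑ n ∈ range N with ¬n ≤ m, ((m : ℝ) + 1 + ((n : ℝ) + 1))⁻¹ * (√((n : ℝ) + 1))⁻¹
      ≤ 2 * (√((m : ℝ) + 1))⁻¹ :=
    calc _ ≤ ∑ n ∈ Ico (m + 1) N, (((n : ℝ) + 1) * √((n : ℝ) + 1))⁻¹ := by
          refine sum_le_sum_of_subset_of_nonneg (fun n hn => ?_) (fun n _ _ => by positivity)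
            |>.trans' (sum_le_sum fun n _ => ?_)
          · simp only [mem_filter, mem_range, mem_Ico] at hn ⊢
            omega
          · rw [mul_inv]
            refine mul_le_mul_of_nonneg_right (inv_anti₀ (by positivity) ?_) (by positivity)
            linarith
      _ ≤ 2 * (√((m : ℝ) + 1))⁻¹ := by
          exact_mod_cast sum_Ico_inv_mul_sqrt_add_one_le m.succ_pos N
  linarith

theorem hilbert_series_summable_of_antitone_general (x : ℕ → ℝ) (hsq : Summable fun n => x n ^ 2) :
    Summable (fun p : ℕ × ℕ =>
      x p.1 * x p.2 / ((p.1 : ℝ) + 1 + ((p.2 : ℝ) + 1))) := by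
  simpa only [div_eq_mul_inv] using summable_mul_mul_of_schur_test (fun m n => by positivity)
    (fun m n => by rw [add_comm]) (fun n => by positivity) sum_range_inv_add_mul_inv_sqrt_le hsq

/-- If a decreasing square-summable sequence of positive reals is given, the
Hilbert double series converges. Here `x n` denotes x_{n+1}. -/
theorem hilbert_series_summable_of_antitone (x : ℕ → ℝ) (hpos : ∀ n, 0 < x n)
    (hdec : Antitone x) (hsq : Summable fun n => x n ^ 2) :
    Summable (fun p : ℕ × ℕ =>
      x p.1 * x p.2 / ((p.1 : ℝ) + 1 + ((p.2 : ℝ) + 1))) :=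
  hilbert_series_summable_of_antitone_general x hsq
end

section
/- The entire function f(z) = ∏_{n=1}^∞ (1 - z/n²) satisfies min_{|z|=r} |f(z)| ≤ r^{-1/2}/π for all sufficiently large r > 0. -/
/-!
By Euler's product `sin (π z) = π z ∏ (1 - z² / n²)`, at the positive real point `z = r` we have
`f r = sin (π √r) / (π √r)`, of modulus at most `1 / (π √r)`; the minimum modulus on `|z| = r`
is bounded by this value.
-/

/-- The minimum modulus of `f` on the circle of radius `r`. -/
noncomputable def minMod (f : ℂ → ℂ) (r : ℝ) : ℝ :=
  sInf ((fun z => ‖f z‖) '' Metric.sphere (0 : ℂ) r)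

open Real

lemma minMod_le_norm (f : ℂ → ℂ) {r : ℝ} (hr : 0 ≤ r) : minMod f r ≤ ‖f r‖ :=
  csInf_le ⟨0, by rintro _ ⟨_, _, rfl⟩; exact norm_nonneg _⟩
    ⟨r, by simp [abs_of_nonneg hr], rfl⟩

lemma summable_div_natSucc_sq (z : ℂ) : Summable fun n : ℕ => z / ((n : ℂ) + 1) ^ 2 := by
  have h : Summable fun n : ℕ => 1 / ((n : ℝ) + 1) ^ 2 := by
    simpa using (summable_nat_add_iff 1).mpr (Real.summable_one_div_nat_pow.mpr one_lt_two)
  refine Summable.of_norm ((h.mul_left ‖z‖).congr fun n => ?_)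
  have hn : ‖(n : ℂ) + 1‖ = n + 1 := by exact_mod_cast Complex.norm_natCast (n + 1)
  rw [norm_div, norm_pow, hn, mul_one_div]

lemma multipliable_one_sub_div_natSucc_sq (z : ℂ) :
    Multipliable fun n : ℕ => 1 - z / ((n : ℂ) + 1) ^ 2 := by
  simpa [sub_eq_add_neg, neg_div] using
    Complex.multipliable_one_add_of_summable (summable_div_natSucc_sq (-z))

lemma mul_tprod_one_sub_sq_div_natSucc_sq (z : ℂ) :
    π * z * ∏' n : ℕ, (1 - z ^ 2 / ((n : ℂ) + 1) ^ 2) = Complex.sin (π * z) :=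
  tendsto_nhds_unique
    (((multipliable_one_sub_div_natSucc_sq (z ^ 2)).hasProd.tendsto_prod_nat).const_mul _)
    (Complex.tendsto_euler_sin_prod z)

lemma norm_tprod_one_sub_div_natSucc_sq_le {r : ℝ} (hr : 0 < r) :
    ‖∏' n : ℕ, (1 - (r : ℂ) / ((n : ℂ) + 1) ^ 2)‖ ≤ 1 / (π * √r) := by
  have hπr : 0 < π * √r := by positivity
  have hsq : ((√r : ℝ) : ℂ) ^ 2 = r := by rw [← Complex.ofReal_pow, Real.sq_sqrt hr.le]
  have hsin := mul_tprod_one_sub_sq_div_natSucc_sq (√r)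
  rw [hsq] at hsin
  rw [le_div_iff₀ hπr, mul_comm, ← Real.norm_of_nonneg hπr.le, ← Complex.norm_real, ← norm_mul,
    Complex.ofReal_mul, hsin, ← Complex.ofReal_mul, ← Complex.ofReal_sin, Complex.norm_real]
  exact Real.abs_sin_le_one _

/-- The entire function ∏ (1 - z/n²) has minimum modulus at most r^(-1/2)/π
for all sufficiently large r. -/
theorem prod_one_sub_div_sq_min_modulus (f : ℂ → ℂ)
    (hf : ∀ z : ℂ, f z = ∏' n : ℕ, (1 - z / ((n : ℂ) + 1) ^ 2)) :
    ∃ R : ℝ, ∀ r : ℝ, R ≤ r → minMod f r ≤ r ^ (-(1 / 2) : ℝ) / Real.pi := by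
  refine ⟨1, fun r hr => ?_⟩
  have hr0 : 0 < r := one_pos.trans_le hr
  calc minMod f r ≤ ‖f r‖ := minMod_le_norm f hr0.le
    _ ≤ 1 / (π * √r) := (hf r).symm ▸ norm_tprod_one_sub_div_natSucc_sq_le hr0
    _ = r ^ (-(1 / 2) : ℝ) / π := by
      rw [Real.rpow_neg hr0.le, ← Real.sqrt_eq_rpow]; field_simp
end

section
/- There exists a function R : ℂ → ℝ_{>0} such that for every n ≥ 1 and all complex numbers a_0, a_2, ..., a_n, the polynomial p(z) = a_0 + z + a_2 z² + ⋯ + a_n z^n assumes at least one of the values 0 or 1 at some point z with |z| ≤ R(a_0). -/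
/-!
The proof works for any holomorphic `f` on a disc `|z| < R` with `f 0 = a₀` and `f' 0 = 1`.
If `f` omits `0` and `1`, then `F = log f / 2πi` omits `0` and `1`, so `√F` and `√(F - 1)` exist,
and `H = log (√F + √(F - 1))` satisfies `f = exp (2πi cosh² H)`, with `H 0` determined by `a₀`.
Hence `H` omits every `v` with `cosh² v ∈ ℕ`; these points are `3`-dense in `ℂ`. Differentiating
at `0` gives `|H' 0| = 1 / (2π |a₀ sinh (2 H 0)|)`, and Bloch's theorem puts a disc of radius
`R |H' 0| / 64` inside the image of `H`. That radius is at most `3`, which bounds `R` in terms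
of `a₀`.
-/

open Metric Set Filter Complex
open scoped Real Topology

theorem exists_differentiableOn_exp_eq {f : ℂ → ℂ} {c : ℂ} {R : ℝ}
    (hf : DifferentiableOn ℂ f (ball c R)) (hf₀ : ∀ z ∈ ball c R, f z ≠ 0) {w₀ : ℂ}
    (hw₀ : exp w₀ = f c) :
    ∃ g : ℂ → ℂ, DifferentiableOn ℂ g (ball c R) ∧ g c = w₀ ∧ ∀ z ∈ ball c R, exp (g z) = f z := by
  obtain ⟨g, hgc, hg⟩ :=
    (((hf.analyticOnNhd isOpen_ball).deriv.differentiableOn.div hf hf₀).isExactOn_ball).with_val_at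
      c w₀
  have hgd : DifferentiableOn ℂ g (ball c R) := fun z hz ↦
    (hg z hz).differentiableAt.differentiableWithinAt
  refine ⟨g, hgd, hgc, fun z hz ↦ ?_⟩
  -- `f e^{-g}` is constant because `g' = f' / f`
  have hconst : EqOn (deriv fun z ↦ f z * exp (-g z)) 0 (ball c R) := fun z hz ↦ by
    have hfz := (hf.differentiableAt (isOpen_ball.mem_nhds hz)).hasDerivAt
    rw [(hfz.fun_mul (hg z hz).fun_neg.cexp).deriv, Pi.zero_apply, Pi.div_apply]
    field_simp [hf₀ z hz]
    ring
  have := isOpen_ball.is_const_of_deriv_eq_zero (convex_ball c R).isPreconnected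
    (hf.fun_mul hgd.fun_neg.cexp) hconst hz (mem_ball_self (pos_of_mem_ball hz))
  rw [hgc, ← hw₀, ← exp_add, add_neg_cancel, exp_zero, exp_neg, mul_inv_eq_one₀ (exp_ne_zero _)]
    at this
  exact this.symm

theorem exists_differentiableOn_sq_eq {f : ℂ → ℂ} {c : ℂ} {R : ℝ} (hR : 0 < R)
    (hf : DifferentiableOn ℂ f (ball c R)) (hf₀ : ∀ z ∈ ball c R, f z ≠ 0) {s₀ : ℂ}
    (hs₀ : s₀ ^ 2 = f c) :
    ∃ g : ℂ → ℂ, DifferentiableOn ℂ g (ball c R) ∧ g c = s₀ ∧ ∀ z ∈ ball c R, g z ^ 2 = f z := by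
  have hs₀0 : s₀ ≠ 0 := by
    rintro rfl
    exact hf₀ c (mem_ball_self hR) (by simp [← hs₀])
  obtain ⟨L, hLd, hLc, hL⟩ := exists_differentiableOn_exp_eq hf hf₀ (w₀ := 2 * log s₀)
    (by rw [← hs₀, ← exp_log hs₀0, ← exp_nat_mul, exp_log hs₀0]; norm_num)
  refine ⟨fun z ↦ exp (L z / 2), (hLd.div_const 2).cexp, by simp [hLc, exp_log hs₀0],
    fun z hz ↦ ?_⟩
  rw [← exp_nat_mul, ← hL z hz]
  ring_nf

theorem exists_differentiableOn_cosh_sq_eq {F : ℂ → ℂ} {c : ℂ} {R : ℝ} (hR : 0 < R)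
    (hF : DifferentiableOn ℂ F (ball c R)) (hF₀ : ∀ z ∈ ball c R, F z ≠ 0)
    (hF₁ : ∀ z ∈ ball c R, F z ≠ 1) {w₀ : ℂ} (hw₀ : cosh w₀ ^ 2 = F c) :
    ∃ H : ℂ → ℂ, DifferentiableOn ℂ H (ball c R) ∧ H c = w₀ ∧
      ∀ z ∈ ball c R, cosh (H z) ^ 2 = F z := by
  obtain ⟨G₁, hG₁d, hG₁c, hG₁⟩ := exists_differentiableOn_sq_eq hR hF hF₀ hw₀
  obtain ⟨G₂, hG₂d, hG₂c, hG₂⟩ := exists_differentiableOn_sq_eq hR (hF.sub_const 1)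
    (fun z hz ↦ sub_ne_zero.2 (hF₁ z hz)) (s₀ := sinh w₀) (by rw [← hw₀, cosh_sq]; ring)
  have hinv : ∀ z ∈ ball c R, (G₁ z + G₂ z) * (G₁ z - G₂ z) = 1 := fun z hz ↦ by
    linear_combination hG₁ z hz - hG₂ z hz
  -- `H = log (G₁ + G₂)` has `e^{-H} = G₁ - G₂`, hence `cosh H = G₁`
  obtain ⟨H, hHd, hHc, hH⟩ := exists_differentiableOn_exp_eq (hG₁d.fun_add hG₂d)
    (fun z hz ↦ left_ne_zero_of_mul_eq_one (hinv z hz)) (w₀ := w₀)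
    (by rw [hG₁c, hG₂c, cosh_add_sinh])
  refine ⟨H, hHd, hHc, fun z hz ↦ ?_⟩
  have hcosh : cosh (H z) = G₁ z := by
    rw [cosh, exp_neg, hH z hz, inv_eq_of_mul_eq_one_right (hinv z hz)]
    ring
  rw [hcosh, hG₁ z hz]

theorem exists_differentiableOn_eq_exp_two_pi_I_mul_cosh_sq {f : ℂ → ℂ} {c : ℂ} {R : ℝ}
    (hR : 0 < R) (hf : DifferentiableOn ℂ f (ball c R)) (hf₀ : ∀ z ∈ ball c R, f z ≠ 0)
    (hf₁ : ∀ z ∈ ball c R, f z ≠ 1) {w₀ : ℂ} (hw₀ : cosh w₀ ^ 2 = log (f c) / (2 * π * I)) :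
    ∃ H : ℂ → ℂ, DifferentiableOn ℂ H (ball c R) ∧ H c = w₀ ∧
      ∀ z ∈ ball c R, f z = exp (2 * π * I * cosh (H z) ^ 2) := by
  obtain ⟨L, hLd, hLc, hL⟩ :=
    exists_differentiableOn_exp_eq hf hf₀ (exp_log (hf₀ c (mem_ball_self hR)))
  have hfL : ∀ z ∈ ball c R, f z = exp (2 * π * I * (L z / (2 * π * I))) := fun z hz ↦ by
    rw [mul_div_cancel₀ _ two_pi_I_ne_zero, hL z hz]
  obtain ⟨H, hHd, hHc, hH⟩ := exists_differentiableOn_cosh_sq_eq hR (hLd.div_const _)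
    (fun z hz h ↦ hf₁ z hz (by rw [hfL z hz, h, mul_zero, exp_zero]))
    (fun z hz h ↦ hf₁ z hz (by rw [hfL z hz, h, mul_one, exp_two_pi_mul_I]))
    (by rw [hLc, hw₀])
  exact ⟨H, hHd, hHc, fun z hz ↦ by rw [hfL z hz, hH z hz]⟩

theorem ball_subset_image_ball_of_norm_deriv_le {h : ℂ → ℂ} {a : ℂ} {ρ M : ℝ} (hρ : 0 < ρ)
    (hd : DifferentiableOn ℂ h (ball a ρ)) (hM : ∀ z ∈ ball a ρ, ‖deriv h z‖ ≤ M) :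
    ball (h a) (‖deriv h a‖ ^ 2 * ρ / (16 * M)) ⊆ h '' ball a ρ := by
  set μ := ‖deriv h a‖
  rcases (norm_nonneg (deriv h a)).eq_or_lt with hμ | hμ
  · simp [μ, ← hμ]
  have hμM : μ ≤ M := hM a (mem_ball_self hρ)
  have hM0 : 0 < M := hμ.trans_le hμM
  have hschwarz : ∀ z ∈ ball a ρ, ‖deriv h z - deriv h a‖ ≤ 2 * M / ρ * ‖z - a‖ := by
    intro z hz
    have hmaps : MapsTo (deriv h) (ball a ρ) (closedBall (deriv h a) (2 * M)) := fun w hw ↦ by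
      rw [mem_closedBall, dist_eq_norm]
      linarith [norm_sub_le (deriv h w) (deriv h a), hM w hw]
    simpa only [dist_eq_norm] using Complex.dist_le_div_mul_dist_of_mapsTo_ball
      (hd.analyticOnNhd isOpen_ball).deriv.differentiableOn hmaps hz
  -- at this radius the linear term `μ r` of `h z - h a` is twice the Taylor error `(2M/ρ) r²`
  set r := μ * ρ / (4 * M)
  have hr : 0 < r := by positivity
  have hrρ : r < ρ := by
    rw [div_lt_iff₀ (by positivity)]
    nlinarith
  have hsub : closedBall a r ⊆ ball a ρ := closedBall_subset_ball hrρ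
  have htaylor : ∀ z ∈ closedBall a r,
      ‖h z - h a - deriv h a * (z - a)‖ ≤ 2 * M / ρ * r * ‖z - a‖ := by
    intro z hz
    have := (convex_closedBall a r).norm_image_sub_le_of_norm_hasDerivWithin_le
      (f := fun w ↦ h w - deriv h a * w) (f' := fun w ↦ deriv h w - deriv h a)
      (fun w hw ↦ (((hd.differentiableAt (isOpen_ball.mem_nhds (hsub hw))).hasDerivAt).sub
        ((hasDerivAt_id w).const_mul (deriv h a) |>.congr_deriv (mul_one _))).hasDerivWithinAt)
      (fun w hw ↦ (hschwarz w (hsub hw)).trans (mul_le_mul_of_nonneg_left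
        (by simpa [dist_eq_norm] using hw) (by positivity))) (mem_closedBall_self hr.le) hz
    rwa [show h z - h a - deriv h a * (z - a) = h z - deriv h a * z - (h a - deriv h a * a) by
      ring]
  have hsphere : ∀ z ∈ sphere a r, μ ^ 2 * ρ / (8 * M) ≤ ‖h z - h a‖ := by
    intro z hz
    have hza : ‖z - a‖ = r := by simpa [dist_eq_norm] using hz
    have herr : ‖deriv h a * (z - a) - (h z - h a)‖ ≤ 2 * M / ρ * r * r := by
      rw [norm_sub_rev]
      exact (htaylor z (sphere_subset_closedBall hz)).trans_eq (by rw [hza])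
    have hlin : ‖deriv h a * (z - a)‖ = μ * r := by rw [norm_mul, hza]
    have := norm_sub_norm_le (deriv h a * (z - a)) (deriv h a * (z - a) - (h z - h a))
    rw [sub_sub_cancel, hlin] at this
    have hval : μ * r - 2 * M / ρ * r * r = μ ^ 2 * ρ / (8 * M) := by
      simp only [r]; field_simp; ring
    linarith
  have hnonconst : ∃ᶠ z in 𝓝 a, h z ≠ h a := by
    refine fun hconst ↦ hμ.ne' ?_
    have : h =ᶠ[𝓝 a] fun _ ↦ h a := hconst.mono fun _ ↦ not_not.1
    rw [this.deriv_eq, deriv_const, norm_zero]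
  have hcover := (hd.diffContOnCl_ball hsub).ball_subset_image_closedBall hr hsphere hnonconst
  rw [div_div, mul_comm (8 * M), ← mul_assoc, show (2 : ℝ) * 8 = 16 by norm_num] at hcover
  exact hcover.trans (image_mono hsub)

theorem exists_ball_subset_image_ball {h : ℂ → ℂ} {r R : ℝ} (hr : 0 < r) (hrR : r < R)
    (hd : DifferentiableOn ℂ h (ball 0 R)) :
    ∃ w, ball w (r * ‖deriv h 0‖ / 64) ⊆ h '' ball 0 R := by
  have hsub : closedBall (0 : ℂ) r ⊆ ball 0 R := closedBall_subset_ball hrR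
  -- at a maximiser `z₀` of `(r - ‖z‖) ‖h' z‖`, `‖h'‖ ≤ 2 ‖h' z₀‖` on `ball z₀ ((r - ‖z₀‖) / 2)`
  obtain ⟨z₀, hz₀, hmax⟩ := (isCompact_closedBall (0 : ℂ) r).exists_isMaxOn
    (nonempty_closedBall.2 hr.le)
    (((continuous_const.sub continuous_norm).continuousOn).mul
      (((hd.analyticOnNhd isOpen_ball).deriv.continuousOn.mono hsub).norm))
  set m := (r - ‖z₀‖) * ‖deriv h z₀‖
  have hm : r * ‖deriv h 0‖ ≤ m := by
    simpa using hmax (mem_closedBall_self hr.le)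
  rcases le_or_gt m 0 with hm0 | hm0
  · refine ⟨h 0, ?_⟩
    rw [ball_eq_empty.2 (by linarith)]
    exact empty_subset _
  set d := r - ‖z₀‖
  have hd0 : 0 < d := pos_of_mul_pos_left hm0 (norm_nonneg _)
  have hball : ball z₀ (d / 2) ⊆ ball 0 R := fun z hz ↦ by
    rw [mem_ball, dist_eq_norm] at hz
    rw [mem_ball_zero_iff]
    linarith [norm_le_norm_add_norm_sub' z z₀]
  have hbound : ∀ z ∈ ball z₀ (d / 2), ‖deriv h z‖ ≤ 2 * m / d := by
    intro z hz
    rw [mem_ball, dist_eq_norm] at hz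
    have hzr : ‖z‖ ≤ r := by linarith [norm_le_norm_add_norm_sub' z z₀]
    have h1 : (r - ‖z‖) * ‖deriv h z‖ ≤ m := hmax (mem_closedBall_zero_iff.2 hzr)
    have h2 : d / 2 ≤ r - ‖z‖ := by linarith [norm_le_norm_add_norm_sub' z z₀]
    rw [le_div_iff₀ hd0]
    nlinarith [norm_nonneg (deriv h z)]
  refine ⟨h z₀, (ball_subset_ball ?_).trans ((ball_subset_image_ball_of_norm_deriv_le
    (half_pos hd0) (hd.mono hball) hbound).trans (image_mono hball))⟩
  have : ‖deriv h z₀‖ = m / d := (mul_div_cancel_left₀ _ hd0.ne').symm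
  rw [this]
  field_simp
  linarith

theorem Real.exists_abs_sub_le_one_cosh_sq_eq_natCast (c : ℝ) :
    ∃ x : ℝ, |x - c| ≤ 1 ∧ ∃ m : ℕ, Real.cosh x ^ 2 = m := by
  wlog hc : 0 ≤ c
  · obtain ⟨x, hx, m, hm⟩ := this (-c) (by linarith)
    refine ⟨-x, ?_, m, by rwa [Real.cosh_neg]⟩
    rwa [show -x - c = -(x - -c) by ring, abs_neg]
  have hcosh_one : 3 / 2 ≤ Real.cosh 1 := by
    have := Real.exp_one_gt_d9
    have := Real.exp_pos 1
    rw [Real.cosh_eq, Real.exp_neg, le_div_iff₀ two_pos, ← sub_nonneg]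
    field_simp
    nlinarith
  have hstep : Real.cosh c ^ 2 + 1 ≤ Real.cosh (c + 1) ^ 2 := by
    have h1 : 3 / 2 * Real.cosh c ≤ Real.cosh (c + 1) := by
      rw [Real.cosh_add]
      nlinarith [Real.sinh_nonneg_iff.2 hc, Real.sinh_nonneg_iff.2 zero_le_one, Real.one_le_cosh c]
    nlinarith [Real.one_le_cosh c]
  obtain ⟨x, ⟨hcx, hxc⟩, hx⟩ := intermediate_value_Icc (by linarith : c ≤ c + 1)
    (Real.continuous_cosh.pow 2).continuousOn
    (show (⌈Real.cosh c ^ 2⌉₊ : ℝ) ∈ Icc _ _ from ⟨Nat.le_ceil _,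
      (Nat.ceil_lt_add_one (by positivity)).le.trans hstep⟩)
  exact ⟨x, abs_le.2 ⟨by linarith, by linarith⟩, _, hx⟩

theorem Complex.exists_dist_le_three_cosh_sq_eq_natCast (w : ℂ) :
    ∃ v : ℂ, dist v w ≤ 3 ∧ ∃ m : ℕ, cosh v ^ 2 = m := by
  obtain ⟨x, hx, m, hm⟩ := Real.exists_abs_sub_le_one_cosh_sq_eq_natCast w.re
  set k := round (w.im / π)
  have hk : |k * π - w.im| ≤ π / 2 := by
    have := abs_sub_round (w.im / π)
    rw [abs_sub_comm] at this
    calc |k * π - w.im| = |k - w.im / π| * π := by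
          rw [← abs_of_pos Real.pi_pos, ← abs_mul, abs_of_pos Real.pi_pos]; congr 1; field_simp
      _ ≤ π / 2 := by nlinarith [Real.pi_pos]
  refine ⟨x + k * (π * I), ?_, m, ?_⟩
  · rw [dist_eq_norm]
    refine (norm_le_abs_re_add_abs_im _).trans ?_
    simp only [add_re, ofReal_re, mul_re, intCast_re, I_re, intCast_im, I_im, add_im, ofReal_im,
      mul_im, sub_re, sub_im, mul_zero, zero_mul, mul_one, sub_zero, add_zero, zero_add]
    linarith [Real.pi_lt_four]
  · have := ((cosh_antiperiodic.mul cosh_antiperiodic).int_mul k) x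
    simp only [Pi.mul_apply, ← sq] at this
    rw [this, ← ofReal_cosh, ← ofReal_pow, hm, ofReal_natCast]

theorem Complex.exists_cosh_sq_eq (z : ℂ) : ∃ w, cosh w ^ 2 = z := by
  obtain ⟨s, rfl⟩ := IsAlgClosed.exists_pow_nat_eq z two_pos
  obtain ⟨u, rfl⟩ := cos_surjective s
  exact ⟨u * I, by rw [cosh_mul_I]⟩

/-- `landauCenter a₀` is the value at `0` of the `H` with `f = exp (2πi cosh² H)`; the constant
`384 π = 2π · 3 · 64` in `landauRadius` combines the `2π` of this representation, the mesh `3` of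
the points with `cosh² ∈ ℕ` and the Bloch constant `64`. -/
noncomputable def landauCenter (a₀ : ℂ) : ℂ :=
  (exists_cosh_sq_eq (log a₀ / (2 * π * I))).choose

theorem cosh_sq_landauCenter (a₀ : ℂ) : cosh (landauCenter a₀) ^ 2 = log a₀ / (2 * π * I) :=
  (exists_cosh_sq_eq _).choose_spec

noncomputable def landauRadius (a₀ : ℂ) : ℝ :=
  384 * π * ‖a₀ * sinh (2 * landauCenter a₀)‖ + 1

theorem landauRadius_pos (a₀ : ℂ) : 0 < landauRadius a₀ := by
  unfold landauRadius
  positivity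

theorem exists_mem_ball_eq_zero_or_eq_one_of_landauRadius_le {f : ℂ → ℂ} {R : ℝ}
    (hf : DifferentiableOn ℂ f (ball 0 R)) (hf' : deriv f 0 = 1) (hR : landauRadius (f 0) ≤ R) :
    ∃ z ∈ ball (0 : ℂ) R, f z = 0 ∨ f z = 1 := by
  have hR₀ : 0 < R := (landauRadius_pos _).trans_le hR
  have h0 : (0 : ℂ) ∈ ball 0 R := mem_ball_self hR₀
  by_contra! hv
  obtain ⟨H, hHd, hH0, hfH⟩ := exists_differentiableOn_eq_exp_two_pi_I_mul_cosh_sq hR₀ hf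
    (fun z hz ↦ (hv z hz).1) (fun z hz ↦ (hv z hz).2) (cosh_sq_landauCenter (f 0))
  set K := 2 * π * ‖f 0 * sinh (2 * landauCenter (f 0))‖
  have hK : K * ‖deriv H 0‖ = 1 := by
    have hH' := ((hHd.differentiableAt (isOpen_ball.mem_nhds h0)).hasDerivAt.ccosh.fun_pow 2
      |>.const_mul (2 * π * I)).cexp
    have hfH' : f =ᶠ[𝓝 0] fun z ↦ exp (2 * π * I * cosh (H z) ^ 2) :=
      eventually_of_mem (isOpen_ball.mem_nhds h0) hfH
    rw [← hfH 0 h0, hH0] at hH'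
    rw [hfH'.deriv_eq, hH'.deriv] at hf'
    have h1 : f 0 * sinh (2 * landauCenter (f 0)) * (2 * π * I) * deriv H 0 = 1 := by
      rw [sinh_two_mul]
      norm_num at hf'
      linear_combination hf'
    have h2 := congrArg norm h1
    simp only [norm_mul, norm_I, norm_one, Complex.norm_ofNat, Complex.norm_real,
      Real.norm_eq_abs, abs_of_pos Real.pi_pos] at h2
    rw [← h2]
    simp only [K, norm_mul]
    ring
  obtain ⟨r, hKr, hrR⟩ := exists_between (show 192 * K < R by unfold landauRadius at hR; linarith)
  have hK₀ : 0 < K := (by positivity : 0 ≤ K).lt_of_ne fun h ↦ by simp [← h] at hK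
  obtain ⟨w, hw⟩ := exists_ball_subset_image_ball (by linarith) hrR hHd
  obtain ⟨v, hvw, m, hm⟩ := exists_dist_le_three_cosh_sq_eq_natCast w
  have hradius : 3 < r * ‖deriv H 0‖ / 64 := by
    rw [lt_div_iff₀ (by norm_num)]
    nlinarith
  obtain ⟨z, hz, rfl⟩ := hw (mem_ball.2 (hvw.trans_lt hradius))
  exact (hv z hz).2 (by rw [hfH z hz, hm, mul_comm]; exact exp_nat_mul_two_pi_mul_I m)

theorem deriv_sum_range_mul_pow_zero (a : ℕ → ℂ) {n : ℕ} (hn : 1 ≤ n) :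
    deriv (fun z : ℂ ↦ ∑ k ∈ Finset.range (n + 1), a k * z ^ k) 0 = a 1 := by
  have := HasDerivAt.fun_sum (u := Finset.range (n + 1)) fun k _ ↦
    (hasDerivAt_pow k (0 : ℂ)).const_mul (a k)
  rw [this.deriv, Finset.sum_eq_single_of_mem 1 (by simp; omega)]
  · simp
  · intro k _ hk
    rcases k with _ | _ | k <;> simp_all

/-- Landau's theorem: there is a positive function R of the constant term a₀ alone
such that every polynomial a₀ + z + a₂z² + ⋯ + aₙzⁿ takes the value 0 or 1
somewhere in the disk of radius R(a₀). -/
theorem landau_polynomial :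
    ∃ R : ℂ → ℝ, (∀ a₀ : ℂ, 0 < R a₀) ∧
      ∀ (n : ℕ), 1 ≤ n → ∀ a : ℕ → ℂ, a 1 = 1 →
        ∃ z : ℂ, ‖z‖ ≤ R (a 0) ∧
          ((∑ k ∈ Finset.range (n + 1), a k * z ^ k) = 0 ∨
            (∑ k ∈ Finset.range (n + 1), a k * z ^ k) = 1) := by
  refine ⟨landauRadius, landauRadius_pos, fun n hn a ha₁ ↦ ?_⟩
  obtain ⟨z, hz, hpz⟩ := exists_mem_ball_eq_zero_or_eq_one_of_landauRadius_le
    (f := fun z ↦ ∑ k ∈ Finset.range (n + 1), a k * z ^ k) (R := landauRadius (a 0))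
    (by fun_prop) (by rw [deriv_sum_range_mul_pow_zero a hn, ha₁])
    (by simp [Finset.sum_range_succ'])
  exact ⟨z, (mem_ball_zero_iff.1 hz).le, hpz⟩
end
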